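/- Let G be a graph with Godsil-McKay switching set X and switched graph G', and let H be any graph. Then the sets X_i = {i} × X for i ∈ V(H), together with the remaining vertices Y, form a Godsil-McKay switching partition of the tensor product H × G, and switching with respect to this partition yields H × G'. In particular, H × G and H × G' are cospectral. -/

import Mathlib

open Finset
open scoped Classical

variable {V : Type*}

/-- `y` has exactly half of the vertices of `X` as neighbours in `G`. -/
def halfIn (G : SimpleGraph V) (X : Finset V) (y : V) : Prop :=
  2 * (X.filter (G.Adj y)).card = X.card

/-- A Godsil-McKay switching set: `X` induces a regular subgraph, and every vertex
outside `X` has `0`, `|X|/2` or `|X|` neighbours in `X`. -/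
def IsGMSwitchingSet (G : SimpleGraph V) (X : Finset V) : Prop :=
  (∃ k, ∀ x ∈ X, (X.filter (G.Adj x)).card = k) ∧
    ∀ y ∉ X, (X.filter (G.Adj y)).card = 0 ∨ halfIn G X y ∨
      (X.filter (G.Adj y)).card = X.card

/-- The graph obtained from `G` by Godsil-McKay switching with respect to `X`:
for each vertex `y ∉ X` having exactly `|X|/2` neighbours in `X`, the edges from `y`
to `X` are replaced by the edges from `y` to the other `|X|/2` vertices of `X`. -/
noncomputable def GMswitch (G : SimpleGraph V) (X : Finset V) : SimpleGraph V where
  Adj u v :=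
    if u ∈ X ↔ v ∈ X then G.Adj u v
    else if halfIn G X (if u ∈ X then v else u) then ¬ G.Adj u v else G.Adj u v
  symm := by
    constructor
    intro u v h
    by_cases hm : (u ∈ X ↔ v ∈ X)
    · rw [if_pos hm] at h
      rw [if_pos hm.symm]
      exact h.symm
    · have hm' : ¬ (v ∈ X ↔ u ∈ X) := fun hh => hm hh.symm
      rw [if_neg hm] at h
      rw [if_neg hm']
      have he : (if v ∈ X then u else v) = (if u ∈ X then v else u) := by
        by_cases hu : u ∈ X <;> by_cases hv : v ∈ X <;> simp [hu, hv] at hm ⊢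
      rw [he]
      by_cases hc : halfIn G X (if u ∈ X then v else u)
      · rw [if_pos hc] at h ⊢
        exact fun ha => h ha.symm
      · rw [if_neg hc] at h ⊢
        exact h.symm
  loopless := by
    constructor
    intro u h
    rw [if_pos Iff.rfl] at h
    exact G.loopless.irrefl u h

/-- `lam G x y` is the number of common neighbours of `x` and `y` in `G`. -/
noncomputable def lam [Fintype V] (G : SimpleGraph V) (x y : V) : ℕ :=
  (univ.filter fun z => G.Adj x z ∧ G.Adj y z).card


/-- The tensor product of graphs: `(i,x)` is adjacent to `(j,y)` iff `i ~ j` and `x ~ y`. -/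
def tensorProd {W V : Type*} (H : SimpleGraph W) (G : SimpleGraph V) :
    SimpleGraph (W × V) where
  Adj p q := H.Adj p.1 q.1 ∧ G.Adj p.2 q.2
  symm := ⟨fun _ _ h => ⟨h.1.symm, h.2.symm⟩⟩
  loopless := ⟨fun p h => H.loopless.irrefl p.1 h.1⟩

/-- The copy `{i} × X` of `X` in the product. -/
def copyPart {W V : Type*} [DecidableEq W] [DecidableEq V]
    (X : Finset V) (i : W) : Finset (W × V) := {i} ×ˢ X

/-!
Let `A`, `A'` be the adjacency matrices of `G` and `G'`, and let `Q` act as `(2/|X|) J - I` on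
the coordinates in `X` and as the identity elsewhere. Then `Q² = 1`, and the switching-set
conditions are exactly what makes `Q A Q = A'`: a vertex outside `X` with `0` or `|X|`
neighbours in `X` keeps its edges to `X`, one with `|X|/2` neighbours has them complemented,
and the regularity of `X` keeps the block on `X` unchanged. The adjacency matrix of `H × G` is
`E ⊗ A`, so conjugating by the involution `I ⊗ Q` gives `E ⊗ A'`, the adjacency matrix of
`H × G'`. The partition conditions reduce to those of `X` in `G`, because the neighbours of
`(j, y)` in `{i} × X` are `{i} × (N(y) ∩ X)` if `i ~ j` and there are none otherwise.
-/

open scoped Matrix Kronecker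

lemma two_div_card_mul_card {X : Finset V} {x : V} (hx : x ∈ X) : 2 / (#X : ℝ) * #X = 2 :=
  div_mul_cancel₀ _ (Nat.cast_ne_zero.mpr (Finset.card_ne_zero_of_mem hx))

lemma GMswitch_adj_of_mem_iff {G : SimpleGraph V} {X : Finset V} {u v : V}
    (h : u ∈ X ↔ v ∈ X) : (GMswitch G X).Adj u v ↔ G.Adj u v :=
  iff_of_eq (if_pos h)

lemma GMswitch_adj_of_mem_of_notMem {G : SimpleGraph V} {X : Finset V} {u v : V}
    (hu : u ∈ X) (hv : v ∉ X) :
    (GMswitch G X).Adj u v ↔ if halfIn G X v then ¬ G.Adj u v else G.Adj u v := by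
  simp only [GMswitch, hu, hv, iff_false, not_true, if_false, if_true]

lemma sum_adjMatrix_apply_right (G : SimpleGraph V) (X : Finset V) (u : V) :
    ∑ w ∈ X, G.adjMatrix ℝ u w = #(X.filter (G.Adj u)) := by
  simp [SimpleGraph.adjMatrix_apply]

lemma sum_adjMatrix_apply_left (G : SimpleGraph V) (X : Finset V) (v : V) :
    ∑ w ∈ X, G.adjMatrix ℝ w v = #(X.filter (G.Adj v)) := by
  simp [SimpleGraph.adjMatrix_apply, G.adj_comm _ v]

lemma GMswitch_adjMatrix_of_mem_of_notMem {G : SimpleGraph V} {X : Finset V}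
    (hX : IsGMSwitchingSet G X) {x y : V} (hx : x ∈ X) (hy : y ∉ X) :
    (GMswitch G X).adjMatrix ℝ x y = 2 / #X * #(X.filter (G.Adj y)) - G.adjMatrix ℝ x y := by
  have hX0 : #X ≠ 0 := Finset.card_ne_zero_of_mem hx
  simp only [SimpleGraph.adjMatrix_apply, GMswitch_adj_of_mem_of_notMem hx hy]
  rcases hX.2 y hy with hnone | hhalf | hall
  · have hxy : ¬ G.Adj x y := fun h =>
      Finset.card_ne_zero_of_mem (Finset.mem_filter.mpr ⟨hx, h.symm⟩) hnone
    have : ¬ halfIn G X y := by unfold halfIn; omega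
    simp [this, hxy, hnone]
  · have hc : 2 / (#X : ℝ) * #(X.filter (G.Adj y)) = 1 := by
      unfold halfIn at hhalf
      have hd : (#(X.filter (G.Adj y)) : ℝ) ≠ 0 := Nat.cast_ne_zero.mpr (by omega)
      rw [← hhalf, Nat.cast_mul, Nat.cast_ofNat]
      field_simp
    by_cases hxy : G.Adj x y <;> simp [hhalf, hxy, hc]
  · have hxy : G.Adj x y := (Finset.card_filter_eq_iff.mp hall x hx).symm
    have : ¬ halfIn G X y := by unfold halfIn; omega
    norm_num [this, hxy, hall, two_div_card_mul_card hx]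

section Switching

variable [DecidableEq V]

noncomputable def switchingMatrix (X : Finset V) : Matrix V V ℝ :=
  Matrix.of fun u v =>
    if u ∈ X then (if v ∈ X then 2 / (#X : ℝ) else 0) - (if u = v then 1 else 0)
    else if u = v then 1 else 0

lemma switchingMatrix_apply_of_mem {X : Finset V} {u : V} (hu : u ∈ X) (v : V) :
    switchingMatrix X u v = (if v ∈ X then 2 / (#X : ℝ) else 0) - (if u = v then 1 else 0) :=
  if_pos hu

lemma switchingMatrix_transpose (X : Finset V) : (switchingMatrix X)ᵀ = switchingMatrix X := by
  ext u v
  rcases eq_or_ne u v with rfl | huv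
  · rfl
  · by_cases hu : u ∈ X <;> by_cases hv : v ∈ X <;> simp [switchingMatrix, hu, hv, huv, huv.symm]

variable [Fintype V]

lemma switchingMatrix_mul_apply (X : Finset V) (M : Matrix V V ℝ) (u v : V) :
    (switchingMatrix X * M) u v =
      if u ∈ X then 2 / #X * ∑ w ∈ X, M w v - M u v else M u v := by
  by_cases hu : u ∈ X <;>
    simp only [Matrix.mul_apply, switchingMatrix, Matrix.of_apply, hu, if_true, if_false,
      sub_mul, Finset.sum_sub_distrib, ite_mul, zero_mul, one_mul, Finset.sum_ite_eq,
      Finset.mem_univ, Finset.sum_ite_mem, Finset.univ_inter, Finset.mul_sum]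

lemma mul_switchingMatrix_apply (X : Finset V) (M : Matrix V V ℝ) (u v : V) :
    (M * switchingMatrix X) u v =
      if v ∈ X then 2 / #X * ∑ w ∈ X, M u w - M u v else M u v := by
  rw [← Matrix.transpose_apply (M * _), Matrix.transpose_mul, switchingMatrix_transpose,
    switchingMatrix_mul_apply]
  simp only [Matrix.transpose_apply]

lemma switchingMatrix_mul_self (X : Finset V) : switchingMatrix X * switchingMatrix X = 1 := by
  ext u v
  rw [switchingMatrix_mul_apply]
  by_cases hu : u ∈ X
  · rw [if_pos hu, Finset.sum_congr rfl fun w hw => switchingMatrix_apply_of_mem hw v,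
      switchingMatrix_apply_of_mem hu, Matrix.one_apply]
    have hc := two_div_card_mul_card hu
    by_cases hv : v ∈ X
    · simp only [hv, if_true, Finset.sum_sub_distrib, Finset.sum_const, nsmul_eq_mul,
        Finset.sum_ite_eq']
      linear_combination (2 / (#X : ℝ)) * hc
    · simp [hv]
  · simp [switchingMatrix, hu, Matrix.one_apply]

lemma switchingMatrix_mul_adjMatrix_mul_switchingMatrix {G : SimpleGraph V} {X : Finset V}
    (hX : IsGMSwitchingSet G X) :
    switchingMatrix X * G.adjMatrix ℝ * switchingMatrix X = (GMswitch G X).adjMatrix ℝ := by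
  obtain ⟨k, hk⟩ := hX.1
  ext u v
  rw [mul_switchingMatrix_apply]
  by_cases hv : v ∈ X
  · rw [if_pos hv]
    by_cases hu : u ∈ X
    · have hrow : ∀ w ∈ X, (switchingMatrix X * G.adjMatrix ℝ) u w =
          2 / #X * k - G.adjMatrix ℝ u w := by
        intro w hw
        rw [switchingMatrix_mul_apply, if_pos hu, sum_adjMatrix_apply_left, hk w hw]
      rw [Finset.sum_congr rfl hrow, hrow v hv, Finset.sum_sub_distrib,
        sum_adjMatrix_apply_right, hk u hu, Finset.sum_const, nsmul_eq_mul,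
        SimpleGraph.adjMatrix_apply, SimpleGraph.adjMatrix_apply,
        if_congr (GMswitch_adj_of_mem_iff (iff_of_true hu hv)) rfl rfl]
      linear_combination (2 / (#X : ℝ) * k) * two_div_card_mul_card hu
    · have hrow : ∀ w, (switchingMatrix X * G.adjMatrix ℝ) u w = G.adjMatrix ℝ u w := by
        intro w
        rw [switchingMatrix_mul_apply, if_neg hu]
      rw [hrow, Finset.sum_congr rfl fun w _ => hrow w, sum_adjMatrix_apply_right,
        (GMswitch G X).isSymm_adjMatrix.apply, GMswitch_adjMatrix_of_mem_of_notMem hX hv hu,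
        G.isSymm_adjMatrix.apply]
  · rw [if_neg hv, switchingMatrix_mul_apply]
    by_cases hu : u ∈ X
    · rw [if_pos hu, sum_adjMatrix_apply_left, GMswitch_adjMatrix_of_mem_of_notMem hX hu hv]
    · simp only [if_neg hu, SimpleGraph.adjMatrix_apply,
        GMswitch_adj_of_mem_iff (iff_of_false hu hv)]

end Switching

lemma charpoly_conj_eq_of_mul_self_eq_one {n R : Type*} [Fintype n] [DecidableEq n] [CommRing R]
    {Q : Matrix n n R} (hQ : Q * Q = 1) (M : Matrix n n R) :
    (Q * M * Q).charpoly = M.charpoly := by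
  rw [Matrix.charpoly_mul_comm, ← Matrix.mul_assoc, hQ, Matrix.one_mul]

lemma charpoly_kronecker_conj_eq {m n R : Type*} [Fintype m] [DecidableEq m] [Fintype n]
    [DecidableEq n] [CommRing R] {Q : Matrix n n R} (hQ : Q * Q = 1) (E : Matrix m m R)
    (M : Matrix n n R) : (E ⊗ₖ (Q * M * Q)).charpoly = (E ⊗ₖ M).charpoly := by
  have hIQ : (1 ⊗ₖ Q : Matrix (m × n) (m × n) R) * (1 ⊗ₖ Q) = 1 := by
    rw [← Matrix.mul_kronecker_mul, Matrix.one_mul, hQ, Matrix.one_kronecker_one]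
  have hconj : E ⊗ₖ (Q * M * Q) = (1 ⊗ₖ Q) * (E ⊗ₖ M) * (1 ⊗ₖ Q) := by
    rw [← Matrix.mul_kronecker_mul, ← Matrix.mul_kronecker_mul, Matrix.one_mul, Matrix.mul_one]
  rw [hconj, charpoly_conj_eq_of_mul_self_eq_one hIQ]

section TensorProd

variable {W : Type*}

@[simp]
lemma tensorProd_adj {H : SimpleGraph W} {G : SimpleGraph V} {p q : W × V} :
    (tensorProd H G).Adj p q ↔ H.Adj p.1 q.1 ∧ G.Adj p.2 q.2 :=
  Iff.rfl

lemma adjMatrix_tensorProd {α : Type*} [MulZeroOneClass α] (H : SimpleGraph W)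
    (G : SimpleGraph V) : (tensorProd H G).adjMatrix α = H.adjMatrix α ⊗ₖ G.adjMatrix α := by
  ext p q
  by_cases h₁ : H.Adj p.1 q.1 <;> by_cases h₂ : G.Adj p.2 q.2 <;>
    simp [SimpleGraph.adjMatrix_apply, h₁, h₂]

lemma tensorProd_GMswitch_adj_of_mem_iff {H : SimpleGraph W} {G : SimpleGraph V}
    {X : Finset V} {p q : W × V} (h : p.2 ∈ X ↔ q.2 ∈ X) :
    (tensorProd H (GMswitch G X)).Adj p q ↔ (tensorProd H G).Adj p q :=
  and_congr_right fun _ => GMswitch_adj_of_mem_iff h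

lemma charpoly_adjMatrix_tensorProd_GMswitch [Fintype W] [Fintype V] [DecidableEq W]
    [DecidableEq V] {G : SimpleGraph V} {X : Finset V} (hX : IsGMSwitchingSet G X)
    (H : SimpleGraph W) :
    ((tensorProd H G).adjMatrix ℝ).charpoly =
      ((tensorProd H (GMswitch G X)).adjMatrix ℝ).charpoly := by
  rw [adjMatrix_tensorProd, adjMatrix_tensorProd,
    ← switchingMatrix_mul_adjMatrix_mul_switchingMatrix hX,
    charpoly_kronecker_conj_eq (switchingMatrix_mul_self X)]

variable [DecidableEq W] [DecidableEq V]

lemma mem_copyPart {X : Finset V} {i : W} {q : W × V} :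
    q ∈ copyPart X i ↔ q.1 = i ∧ q.2 ∈ X := by
  rw [copyPart, Finset.mem_product, Finset.mem_singleton]

lemma card_copyPart (X : Finset V) (i : W) : #(copyPart X i) = #X := by
  rw [copyPart, Finset.card_product, Finset.card_singleton, one_mul]

lemma exists_mem_copyPart_iff {X : Finset V} {q : W × V} :
    (∃ i, q ∈ copyPart X i) ↔ q.2 ∈ X := by
  simp [mem_copyPart]

lemma forall_notMem_copyPart_iff {X : Finset V} {q : W × V} :
    (∀ i, q ∉ copyPart X i) ↔ q.2 ∉ X := by
  rw [← not_exists, exists_mem_copyPart_iff]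

lemma card_filter_tensorProd_adj_copyPart (H : SimpleGraph W) (G : SimpleGraph V)
    (X : Finset V) (q : W × V) (j : W) :
    #((copyPart X j).filter ((tensorProd H G).Adj q)) =
      if H.Adj q.1 j then #(X.filter (G.Adj q.2)) else 0 := by
  have : (copyPart X j).filter ((tensorProd H G).Adj q) =
      ({j} : Finset W).filter (H.Adj q.1) ×ˢ X.filter (G.Adj q.2) := by
    ext p
    simp only [copyPart, Finset.mem_filter, Finset.mem_product, tensorProd_adj]
    tauto
  rw [this, Finset.card_product, Finset.filter_singleton]
  split_ifs <;> simp

lemma tensorProd_GMswitch_adj_copyPart {H : SimpleGraph W} {G : SimpleGraph V}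
    {X : Finset V} {i : W} {p q : W × V} (hp : p ∈ copyPart X i) (hq : q.2 ∉ X) :
    if 2 * #((copyPart X i).filter ((tensorProd H G).Adj q)) = #(copyPart X i)
    then ((tensorProd H (GMswitch G X)).Adj p q ↔ ¬ (tensorProd H G).Adj p q)
    else ((tensorProd H (GMswitch G X)).Adj p q ↔ (tensorProd H G).Adj p q) := by
  obtain ⟨rfl, hpX⟩ := mem_copyPart.mp hp
  have hswitch : (tensorProd H (GMswitch G X)).Adj p q ↔
      H.Adj p.1 q.1 ∧ if halfIn G X q.2 then ¬ G.Adj p.2 q.2 else G.Adj p.2 q.2 :=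
    and_congr_right fun _ => GMswitch_adj_of_mem_of_notMem hpX hq
  rw [card_filter_tensorProd_adj_copyPart, card_copyPart, hswitch]
  by_cases hH : H.Adj p.1 q.1
  · simp only [if_pos hH.symm, tensorProd_adj, hH, true_and]
    unfold halfIn
    split_ifs <;> exact Iff.rfl
  · have hX0 : ¬ 2 * 0 = #X := by have := Finset.card_ne_zero_of_mem hpX; omega
    rw [if_neg fun h : H.Adj q.1 p.1 => hH h.symm, if_neg hX0]
    simp [hH]

end TensorProd

/-- The sets `X_i = {i} × X`, together with the remaining vertices, form a Godsil-McKay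
switching partition of the tensor product `H × G`, switching with respect to it yields
`H × G'`, and in particular `H × G` and `H × G'` are cospectral. -/
theorem tensorProd_switching_partition
    {W V : Type*} [Fintype W] [Fintype V] [DecidableEq W] [DecidableEq V]
    (G : SimpleGraph V) (X : Finset V) (hX : IsGMSwitchingSet G X)
    (H : SimpleGraph W) :
    (∀ i j : W, ∃ k, ∀ p ∈ copyPart X i,
        ((copyPart X j).filter ((tensorProd H G).Adj p)).card = k) ∧
    (∀ q : W × V, (∀ i : W, q ∉ copyPart X i) → ∀ i : W,
        ((copyPart X i).filter ((tensorProd H G).Adj q)).card = 0 ∨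
          2 * ((copyPart X i).filter ((tensorProd H G).Adj q)).card =
            (copyPart X i).card ∨
          ((copyPart X i).filter ((tensorProd H G).Adj q)).card =
            (copyPart X i).card) ∧
    (∀ u v : W × V, (∃ i, u ∈ copyPart X i) → (∃ j, v ∈ copyPart X j) →
        ((tensorProd H (GMswitch G X)).Adj u v ↔ (tensorProd H G).Adj u v)) ∧
    (∀ u v : W × V, (∀ i, u ∉ copyPart X i) → (∀ i, v ∉ copyPart X i) →
        ((tensorProd H (GMswitch G X)).Adj u v ↔ (tensorProd H G).Adj u v)) ∧
    (∀ i : W, ∀ p ∈ copyPart X i, ∀ q : W × V, (∀ j : W, q ∉ copyPart X j) →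
        if 2 * ((copyPart X i).filter ((tensorProd H G).Adj q)).card =
            (copyPart X i).card
        then ((tensorProd H (GMswitch G X)).Adj p q ↔ ¬ (tensorProd H G).Adj p q)
        else ((tensorProd H (GMswitch G X)).Adj p q ↔ (tensorProd H G).Adj p q)) ∧
    ((tensorProd H G).adjMatrix ℝ).charpoly =
      ((tensorProd H (GMswitch G X)).adjMatrix ℝ).charpoly := by
  obtain ⟨k, hk⟩ := hX.1
  refine ⟨fun i j => ⟨if H.Adj i j then k else 0, fun p hp => ?_⟩, fun q hq i => ?_,
    fun u v hu hv => ?_, fun u v hu hv => ?_, fun i p hp q hq => ?_,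
    charpoly_adjMatrix_tensorProd_GMswitch hX H⟩
  · obtain ⟨rfl, hpX⟩ := mem_copyPart.mp hp
    rw [card_filter_tensorProd_adj_copyPart, hk p.2 hpX]
  · rw [card_filter_tensorProd_adj_copyPart, card_copyPart]
    split_ifs
    · exact hX.2 q.2 (forall_notMem_copyPart_iff.mp hq)
    · exact Or.inl rfl
  · exact tensorProd_GMswitch_adj_of_mem_iff
      (iff_of_true (exists_mem_copyPart_iff.mp hu) (exists_mem_copyPart_iff.mp hv))
  · exact tensorProd_GMswitch_adj_of_mem_iff
      (iff_of_false (forall_notMem_copyPart_iff.mp hu) (forall_notMem_copyPart_iff.mp hv))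
  · exact tensorProd_GMswitch_adj_copyPart hp (forall_notMem_copyPart_iff.mp hq)
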